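/- Let (α_n) be a decreasing positive sequence with α_n → 0, and let A = {α_n e_n : n ∈ ℕ} ⊂ ℓ_p for p ∈ [1,∞] (with p = ∞ meaning c₀). Then d_B(A − A; ℓ_p) = 2 d_B(A; ℓ_p). -/

import Mathlib

open Filter Metric Set Pointwise Topology ENNReal

/-- `coverNum X ε` : minimal number of balls of radius `ε` with centres in `X` covering `X`. -/
noncomputable def coverNum {E : Type*} [SeminormedAddCommGroup E] (X : Set E) (ε : ℝ) : ℕ∞ :=
  sInf {n : ℕ∞ | ∃ F : Finset E, ↑F ⊆ X ∧ (X ⊆ ⋃ c ∈ F, Metric.ball c ε) ∧ n = F.card}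

/-- extended logarithm of an extended natural number. -/
noncomputable def elog (n : ℕ∞) : EReal :=
  if n = ⊤ then ⊤ else ((Real.log n.toNat : ℝ) : EReal)

/-- The upper box-counting dimension `d_B(X) = limsup_{ε → 0⁺} log N(X,ε) / (-log ε)`. -/
noncomputable def dimBox {E : Type*} [SeminormedAddCommGroup E] (X : Set E) : EReal :=
  Filter.limsup (fun ε : ℝ => elog (coverNum X ε) / ((-Real.log ε : ℝ) : EReal)) (𝓝[>] 0)

/-- `thickNum X ε` : smallest dimension of a finite-dimensional subspace `V` with
`dist(x, V) ≤ ε` for all `x ∈ X` (`⊤` if none exists). -/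
noncomputable def thickNum {E : Type*} [NormedAddCommGroup E] [NormedSpace ℝ E]
    (X : Set E) (ε : ℝ) : ℕ∞ :=
  sInf {n : ℕ∞ | ∃ V : Submodule ℝ E, FiniteDimensional ℝ V ∧ n = Module.finrank ℝ V ∧
    ∀ x ∈ X, Metric.infDist x (V : Set E) ≤ ε}

/-- The thickness exponent `τ(X) = limsup_{ε → 0⁺} log d(X,ε) / (-log ε)`. -/
noncomputable def thickness {E : Type*} [NormedAddCommGroup E] [NormedSpace ℝ E]
    (X : Set E) : EReal :=
  Filter.limsup (fun ε : ℝ => elog (thickNum X ε) / ((-Real.log ε : ℝ) : EReal)) (𝓝[>] 0)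

/-- `dualThickNum X θ ε` : minimal dimension of a subspace `U ⊆ E*` such that for all
`x, y ∈ X` with `‖x - y‖ ≥ ε` some `φ ∈ U` has `|φ(x-y)| ≥ ε^(1+θ)`. -/
noncomputable def dualThickNum {E : Type*} [NormedAddCommGroup E] [NormedSpace ℝ E]
    (X : Set E) (θ ε : ℝ) : ℕ∞ :=
  sInf {n : ℕ∞ | ∃ U : Submodule ℝ (E →L[ℝ] ℝ), FiniteDimensional ℝ U ∧ n = Module.finrank ℝ U ∧
    ∀ x ∈ X, ∀ y ∈ X, ε ≤ ‖x - y‖ → ∃ φ ∈ U, ε ^ (1 + θ) ≤ |φ (x - y)|}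

noncomputable def dualThickTheta {E : Type*} [NormedAddCommGroup E] [NormedSpace ℝ E]
    (X : Set E) (θ : ℝ) : EReal :=
  Filter.limsup (fun ε : ℝ => elog (dualThickNum X θ ε) / ((-Real.log ε : ℝ) : EReal)) (𝓝[>] 0)

/-- The dual thickness `τ*(X) = lim_{θ → 0⁺} τ*_θ(X)` (the limit exists by monotonicity and
equals the limsup as `θ → 0⁺`). -/
noncomputable def dualThickness {E : Type*} [NormedAddCommGroup E] [NormedSpace ℝ E]
    (X : Set E) : EReal :=
  Filter.limsup (fun θ : ℝ => dualThickTheta X θ) (𝓝[>] 0)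

/-- `sigmaNum X α ε` : minimal dimension of a subspace `V ⊆ E*` such that whenever
`x, y ∈ X` with `‖x - y‖ ≥ ε` there is `Φ ∈ V` with `‖Φ‖ = 1` and `|Φ(x-y)| ≥ α ε`. -/
noncomputable def sigmaNum {E : Type*} [NormedAddCommGroup E] [NormedSpace ℝ E]
    (X : Set E) (α ε : ℝ) : ℕ∞ :=
  sInf {n : ℕ∞ | ∃ V : Submodule ℝ (E →L[ℝ] ℝ), FiniteDimensional ℝ V ∧ n = Module.finrank ℝ V ∧
    ∀ x ∈ X, ∀ y ∈ X, ε ≤ ‖x - y‖ → ∃ Φ ∈ V, ‖Φ‖ = 1 ∧ α * ε ≤ |Φ (x - y)|}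

noncomputable def sigmaExp {E : Type*} [NormedAddCommGroup E] [NormedSpace ℝ E]
    (X : Set E) (α : ℝ) : EReal :=
  Filter.limsup (fun ε : ℝ => elog (sigmaNum X α ε) / ((-Real.log ε : ℝ) : EReal)) (𝓝[>] 0)

/-!
Write `m(ε)` for the number of `n` with `ε ≤ α n`. The points `α n e_n` with `n ≤ m(ε/2)` form
an `ε`-cover of `A`, so `N(A, ε) ≤ m(ε/2) + 1`. Two different differences `α i e_i - α j e_j`
(`i ≠ j`) disagree by at least `α i` or `α j` in coordinate `i` or `j`, so `A - A` contains
`m(2ε) (m(2ε) - 1)` points that are `2ε`-separated and `N(A - A, ε) ≥ m(2ε) (m(2ε) - 1)`.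
Thus `N(A - A)` is at least the square of `N(A)` after a constant rescaling of `ε`, which does
not change the exponent: `d_B(A - A) ≥ 2 d_B(A)`. The reverse inequality holds for all sets,
because `N(X - Y, ε) ≤ N(X, ε/2) N(Y, ε/2)`.
-/

section CoverNum

variable {E : Type*} [SeminormedAddCommGroup E] {X Y : Set E} {ε : ℝ}

lemma coverNum_le_card (F : Finset E) (hFX : ↑F ⊆ X) (hcov : X ⊆ ⋃ c ∈ F, ball c ε) :
    coverNum X ε ≤ F.card :=
  sInf_le ⟨F, hFX, hcov, rfl⟩

lemma coverNum_empty : coverNum (∅ : Set E) ε = 0 :=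
  nonpos_iff_eq_zero.1 <| (coverNum_le_card ∅ (by simp) (by simp)).trans_eq (by simp)

lemma exists_finset_card_eq_coverNum (h : coverNum X ε ≠ ⊤) :
    ∃ F : Finset E, ↑F ⊆ X ∧ X ⊆ ⋃ c ∈ F, ball c ε ∧ coverNum X ε = F.card := by
  refine csInf_mem (s := {n : ℕ∞ | ∃ F : Finset E, ↑F ⊆ X ∧ (X ⊆ ⋃ c ∈ F, ball c ε) ∧
    n = F.card}) ?_
  exact Set.nonempty_iff_ne_empty.2 fun h' => h (by rw [coverNum, h', sInf_empty])

lemma coverNum_ne_zero (hX : X.Nonempty) : coverNum X ε ≠ 0 := by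
  obtain ⟨x, hx⟩ := hX
  refine (Order.one_le_iff_ne_zero.1 (le_sInf ?_))
  rintro _ ⟨F, -, hcov, rfl⟩
  obtain ⟨c, hc, -⟩ := Set.mem_iUnion₂.1 (hcov hx)
  exact_mod_cast Finset.card_pos.2 ⟨c, hc⟩

lemma card_le_coverNum_of_separated {ι : Type*} (s : Finset ι) (v : ι → E)
    (hvX : ∀ i ∈ s, v i ∈ X)
    (hsep : ∀ i ∈ s, ∀ j ∈ s, i ≠ j → 2 * ε ≤ dist (v i) (v j)) :
    (s.card : ℕ∞) ≤ coverNum X ε := by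
  refine le_sInf ?_
  rintro _ ⟨F, -, hcov, rfl⟩
  have hcentre : ∀ i ∈ s, ∃ c ∈ F, dist (v i) c < ε := fun i hi => by
    simpa only [Set.mem_iUnion₂, mem_ball, exists_prop] using hcov (hvX i hi)
  choose! c hcF hc using hcentre
  refine Nat.cast_le.2 (Finset.card_le_card_of_injOn c hcF fun i hi j hj hcij => ?_)
  by_contra hij
  have hci := hc i hi
  rw [hcij] at hci
  linarith [hsep i hi j hj hij, hc j hj, dist_triangle_right (v i) (v j) (c j)]

lemma coverNum_sub_le : coverNum (X - Y) ε ≤ coverNum X (ε / 2) * coverNum Y (ε / 2) := by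
  classical
  rcases X.eq_empty_or_nonempty with rfl | hX
  · simp [coverNum_empty]
  rcases Y.eq_empty_or_nonempty with rfl | hY
  · simp [coverNum_empty]
  by_cases hXt : coverNum X (ε / 2) = ⊤
  · simp [hXt, ENat.top_mul (coverNum_ne_zero hY)]
  by_cases hYt : coverNum Y (ε / 2) = ⊤
  · simp [hYt, ENat.mul_top (coverNum_ne_zero hX)]
  obtain ⟨F, hFX, hFcov, hF⟩ := exists_finset_card_eq_coverNum hXt
  obtain ⟨G, hGY, hGcov, hG⟩ := exists_finset_card_eq_coverNum hYt
  rw [hF, hG]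
  refine (coverNum_le_card (F - G) ?_ ?_).trans (mod_cast Finset.card_sub_le)
  · rw [Finset.coe_sub]
    exact Set.sub_subset_sub hFX hGY
  · rintro _ ⟨x, hx, y, hy, rfl⟩
    obtain ⟨f, hf, hxf⟩ := Set.mem_iUnion₂.1 (hFcov hx)
    obtain ⟨g, hg, hyg⟩ := Set.mem_iUnion₂.1 (hGcov hy)
    refine Set.mem_iUnion₂.2 ⟨f - g, Finset.sub_mem_sub hf hg, ?_⟩
    rw [mem_ball] at hxf hyg ⊢
    linarith [dist_sub_sub_le x y f g]

end CoverNum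

section ELog

lemma elog_top : elog ⊤ = ⊤ := if_pos rfl

lemma elog_natCast (k : ℕ) : elog k = Real.log k := by
  simp [elog]

lemma elog_nonneg (n : ℕ∞) : 0 ≤ elog n := by
  induction n using ENat.recTopCoe with
  | top => simp [elog_top]
  | coe k => rw [elog_natCast]; exact_mod_cast Real.log_natCast_nonneg k

lemma elog_mono : Monotone elog := by
  intro a b hab
  induction b using ENat.recTopCoe with
  | top => simp [elog_top]
  | coe n =>
    lift a to ℕ using ne_top_of_le_ne_top (ENat.natCast_ne_top n) hab
    rw [elog_natCast, elog_natCast, EReal.coe_le_coe_iff]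
    rcases a.eq_zero_or_pos with rfl | ha
    · simpa using Real.log_natCast_nonneg n
    · exact Real.log_le_log (by exact_mod_cast ha) (by exact_mod_cast hab)

lemma elog_ne_bot (n : ℕ∞) : elog n ≠ ⊥ :=
  ne_bot_of_le_ne_bot EReal.zero_ne_bot (elog_nonneg n)

lemma elog_mul_le (a b : ℕ∞) : elog (a * b) ≤ elog a + elog b := by
  induction a using ENat.recTopCoe with
  | top => simp [elog_top, EReal.top_add_of_ne_bot (elog_ne_bot b)]
  | coe m =>
  induction b using ENat.recTopCoe with
  | top => simp [elog_top, EReal.add_top_of_ne_bot (elog_ne_bot m)]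
  | coe n =>
    rw [← Nat.cast_mul, elog_natCast, elog_natCast, elog_natCast, ← EReal.coe_add,
      EReal.coe_le_coe_iff]
    rcases m.eq_zero_or_pos with rfl | hm
    · simpa using Real.log_natCast_nonneg n
    rcases n.eq_zero_or_pos with rfl | hn
    · simpa using Real.log_natCast_nonneg m
    push_cast
    exact (Real.log_mul (by positivity) (by positivity)).le

end ELog

section LogScale

lemma tendsto_neg_log_nhdsGT_zero : Tendsto (fun ε : ℝ => -Real.log ε) (𝓝[>] 0) atTop :=
  tendsto_neg_atBot_atTop.comp Real.tendsto_log_nhdsGT_zero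

lemma tendsto_div_const_nhdsGT_zero {c : ℝ} (hc : 0 < c) :
    Tendsto (fun ε : ℝ => ε / c) (𝓝[>] 0) (𝓝[>] 0) := by
  refine tendsto_nhdsWithin_of_tendsto_nhds_of_eventually_within _ ?_ ?_
  · simpa using ((continuous_id.div_const c).tendsto 0).mono_left nhdsWithin_le_nhds
  · filter_upwards [self_mem_nhdsWithin] with ε hε using div_pos hε hc

lemma neg_log_div (ε : ℝ) {c : ℝ} (hε : ε ≠ 0) (hc : c ≠ 0) :
    -Real.log (ε / c) = -Real.log ε + Real.log c := by
  rw [Real.log_div hε hc]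
  ring

lemma tendsto_add_mul_neg_log_div_neg_log (C t : ℝ) :
    Tendsto (fun ε : ℝ => (C + t * -Real.log ε) / -Real.log ε) (𝓝[>] 0) (𝓝 t) := by
  have h : Tendsto (fun ε : ℝ => C / -Real.log ε + t) (𝓝[>] 0) (𝓝 t) := by
    simpa using (tendsto_const_nhds.div_atTop tendsto_neg_log_nhdsGT_zero).add_const t
  refine h.congr' ?_
  filter_upwards [tendsto_neg_log_nhdsGT_zero.eventually_gt_atTop 0] with ε hε
  rw [add_div, mul_div_cancel_right₀ t hε.ne']

variable {u : ℝ → EReal}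

lemma eventually_lt_mul_neg_log_of_limsup_lt {s : ℝ}
    (h : limsup (fun ε : ℝ => u ε / ((-Real.log ε : ℝ) : EReal)) (𝓝[>] 0) < s) :
    ∀ᶠ ε in 𝓝[>] 0, u ε < ((s * -Real.log ε : ℝ) : EReal) := by
  filter_upwards [eventually_lt_of_limsup_lt h,
    tendsto_neg_log_nhdsGT_zero.eventually_gt_atTop 0] with ε hε hL
  rwa [EReal.div_lt_iff (by exact_mod_cast hL) (EReal.coe_ne_top _), ← EReal.coe_mul] at hε

lemma frequently_mul_neg_log_lt_of_lt_limsup {s : ℝ}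
    (h : s < limsup (fun ε : ℝ => u ε / ((-Real.log ε : ℝ) : EReal)) (𝓝[>] 0)) :
    ∃ᶠ ε in 𝓝[>] 0, ((s * -Real.log ε : ℝ) : EReal) < u ε := by
  refine ((frequently_lt_of_lt_limsup (by isBoundedDefault) h).and_eventually
    (tendsto_neg_log_nhdsGT_zero.eventually_gt_atTop 0)).mono fun ε ⟨hε, hL⟩ => ?_
  rwa [EReal.lt_div_iff (by exact_mod_cast hL) (EReal.coe_ne_top _), ← EReal.coe_mul] at hε

lemma limsup_div_neg_log_le_of_eventually_le {C t : ℝ}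
    (h : ∀ᶠ ε in 𝓝[>] 0, u ε ≤ ((C + t * -Real.log ε : ℝ) : EReal)) :
    limsup (fun ε : ℝ => u ε / ((-Real.log ε : ℝ) : EReal)) (𝓝[>] 0) ≤ t := by
  calc limsup (fun ε : ℝ => u ε / ((-Real.log ε : ℝ) : EReal)) (𝓝[>] 0)
      ≤ limsup (fun ε : ℝ => (((C + t * -Real.log ε) / -Real.log ε : ℝ) : EReal))
          (𝓝[>] 0) := by
        refine limsup_le_limsup ?_
        filter_upwards [h, tendsto_neg_log_nhdsGT_zero.eventually_gt_atTop 0] with ε hε hL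
        rw [EReal.coe_div]
        exact EReal.div_le_div_right_of_nonneg (by exact_mod_cast hL.le) hε
    _ = t := (EReal.tendsto_coe.2 (tendsto_add_mul_neg_log_div_neg_log C t)).limsup_eq

lemma le_limsup_div_neg_log_of_frequently_le {C t : ℝ}
    (h : ∃ᶠ ε in 𝓝[>] 0, ((C + t * -Real.log ε : ℝ) : EReal) ≤ u ε) :
    t ≤ limsup (fun ε : ℝ => u ε / ((-Real.log ε : ℝ) : EReal)) (𝓝[>] 0) := by
  refine EReal.ge_of_forall_gt_iff_ge.1 fun z hz => le_limsup_of_frequently_le ?_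
  have hz' := (tendsto_add_mul_neg_log_div_neg_log C t).eventually_const_lt
    (EReal.coe_lt_coe_iff.1 hz)
  refine (h.and_eventually (hz'.and (tendsto_neg_log_nhdsGT_zero.eventually_gt_atTop 0))).mono
    fun ε ⟨hε, hzε, hL⟩ => ?_
  calc (z : EReal) ≤ (((C + t * -Real.log ε) / -Real.log ε : ℝ) : EReal) := mod_cast hzε.le
    _ ≤ u ε / ((-Real.log ε : ℝ) : EReal) := by
      rw [EReal.coe_div]
      exact EReal.div_le_div_right_of_nonneg (by exact_mod_cast hL.le) hε

end LogScale

section DimBox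

variable {E : Type*} [SeminormedAddCommGroup E]

lemma dimBox_nonneg (X : Set E) : 0 ≤ dimBox X := by
  refine le_limsup_of_frequently_le (Eventually.frequently ?_)
  filter_upwards [tendsto_neg_log_nhdsGT_zero.eventually_gt_atTop 0] with ε hL
  exact EReal.div_nonneg (elog_nonneg _) (by exact_mod_cast hL.le)

lemma dimBox_sub_le_of_lt {X Y : Set E} {s t : ℝ} (hX : dimBox X < s)
    (hY : dimBox Y < t) : dimBox (X - Y) ≤ ((s + t : ℝ) : EReal) := by
  refine limsup_div_neg_log_le_of_eventually_le (C := (s + t) * Real.log 2) ?_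
  have hX2 := (tendsto_div_const_nhdsGT_zero two_pos).eventually
    (eventually_lt_mul_neg_log_of_limsup_lt hX)
  have hY2 := (tendsto_div_const_nhdsGT_zero two_pos).eventually
    (eventually_lt_mul_neg_log_of_limsup_lt hY)
  filter_upwards [hX2, hY2, self_mem_nhdsWithin] with ε hXε hYε hε
  calc elog (coverNum (X - Y) ε)
      ≤ elog (coverNum X (ε / 2)) + elog (coverNum Y (ε / 2)) :=
        (elog_mono coverNum_sub_le).trans (elog_mul_le _ _)
    _ ≤ ((s * -Real.log (ε / 2) + t * -Real.log (ε / 2) : ℝ) : EReal) := by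
        rw [EReal.coe_add]
        exact add_le_add hXε.le hYε.le
    _ = (((s + t) * Real.log 2 + (s + t) * -Real.log ε : ℝ) : EReal) := by
        rw [neg_log_div ε (ne_of_gt hε) two_ne_zero]
        ring_nf

theorem dimBox_sub_le (X Y : Set E) : dimBox (X - Y) ≤ dimBox X + dimBox Y := by
  have hX := ne_bot_of_le_ne_bot EReal.zero_ne_bot (dimBox_nonneg X)
  have hY := ne_bot_of_le_ne_bot EReal.zero_ne_bot (dimBox_nonneg Y)
  refine EReal.le_add_of_forall_gt (.inl hX) (.inr hY) fun a ha b hb => ?_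
  induction a using EReal.rec with
  | bot => exact absurd ha not_lt_bot
  | top => rw [EReal.top_add_of_ne_bot (ne_bot_of_gt hb)]; exact le_top
  | coe a =>
  induction b using EReal.rec with
  | bot => exact absurd hb not_lt_bot
  | top => rw [EReal.add_top_of_ne_bot (ne_bot_of_gt ha)]; exact le_top
  | coe b => exact_mod_cast dimBox_sub_le_of_lt ha hb

end DimBox

/-- For antitone `α` this is the number of `n` with `ε ≤ α n`. -/
noncomputable def indexBelow (α : ℕ → ℝ) (ε : ℝ) : ℕ := sInf {n | α n < ε}

lemma le_of_lt_indexBelow {α : ℕ → ℝ} {ε : ℝ} {n : ℕ} (hn : n < indexBelow α ε) :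
    ε ≤ α n :=
  not_lt.1 (Nat.notMem_of_lt_sInf hn)

lemma lt_of_indexBelow_le {α : ℕ → ℝ} (hdec : Antitone α) (hlim : Tendsto α atTop (𝓝 0))
    {ε : ℝ} (hε : 0 < ε) {n : ℕ} (hn : indexBelow α ε ≤ n) : α n < ε :=
  (hdec hn).trans_lt (Nat.sInf_mem (hlim.eventually_lt_const hε).exists)

section OrthSeq

variable {p : ℝ≥0∞} {α : ℕ → ℝ}

noncomputable def orthSeq (p : ℝ≥0∞) (α : ℕ → ℝ) : Set (lp (fun _ : ℕ => ℝ) p) :=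
  range fun n => lp.single p n (α n)

lemma exists_le_abs_apply_sub_sub (hpos : ∀ n, 0 < α n) {i j i' j' : ℕ} (hij : i ≠ j)
    (hne : (i, j) ≠ (i', j')) :
    ∃ k, (k = i ∨ k = j) ∧ α k ≤ |((lp.single p i (α i) - lp.single p j (α j)) -
      (lp.single p i' (α i') - lp.single p j' (α j')) : lp (fun _ : ℕ => ℝ) p) k| := by
  by_cases hii' : i = i'
  · subst hii'
    have hjj' : j ≠ j' := fun h => hne (by rw [h])
    refine ⟨j, .inr rfl, ?_⟩
    simp [hjj'.symm, abs_of_pos (hpos j)]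
  · refine ⟨i, .inl rfl, ?_⟩
    by_cases hij' : i = j'
    · subst hij'
      simp only [lp.coeFn_sub, Pi.sub_apply, lp.single_apply, Pi.single_eq_same,
        Pi.single_eq_of_ne hij, Pi.single_eq_of_ne hii']
      rw [abs_of_pos (by linarith [hpos i])]
      linarith [hpos i]
    · simp [hij, hii', hij', abs_of_pos (hpos i)]

variable [Fact (1 ≤ p)]

lemma norm_single_of_pos (hpos : ∀ n, 0 < α n) (n : ℕ) :
    ‖(lp.single p n (α n) : lp (fun _ : ℕ => ℝ) p)‖ = α n := by
  rw [lp.norm_single (zero_lt_one.trans_le Fact.out), Real.norm_of_nonneg (hpos n).le]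

lemma coverNum_orthSeq_le (hpos : ∀ n, 0 < α n) (hdec : Antitone α)
    (hlim : Tendsto α atTop (𝓝 0)) {ε : ℝ} (hε : 0 < ε) :
    coverNum (orthSeq p α) ε ≤ ((indexBelow α (ε / 2) + 1 : ℕ) : ℕ∞) := by
  classical
  set e : ℕ → lp (fun _ : ℕ => ℝ) p := fun n => lp.single p n (α n)
  set m := indexBelow α (ε / 2)
  refine (coverNum_le_card ((Finset.range (m + 1)).image e) ?_ ?_).trans ?_
  · simp only [Finset.coe_image]
    exact image_subset_range _ _
  · rintro _ ⟨n, rfl⟩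
    refine mem_iUnion₂.2 ⟨e (min n m), Finset.mem_image_of_mem e
      (Finset.mem_range.2 (Nat.lt_succ_of_le (min_le_right n m))), ?_⟩
    rcases le_total n m with hnm | hmn
    · rwa [min_eq_left hnm, mem_ball, dist_self]
    · rw [min_eq_right hmn, mem_ball]
      calc dist (e n) (e m) ≤ ‖e n‖ + ‖e m‖ := dist_le_norm_add_norm _ _
        _ = α n + α m := by rw [norm_single_of_pos hpos, norm_single_of_pos hpos]
        _ < ε / 2 + ε / 2 := add_lt_add (lt_of_indexBelow_le hdec hlim (half_pos hε) hmn)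
            (lt_of_indexBelow_le hdec hlim (half_pos hε) le_rfl)
        _ = ε := add_halves ε
  · exact_mod_cast (Finset.card_image_le).trans (Finset.card_range _).le

lemma indexBelow_mul_pred_le_coverNum_orthSeq_sub (hpos : ∀ n, 0 < α n) (δ : ℝ) :
    ((indexBelow α (2 * δ) * (indexBelow α (2 * δ) - 1) : ℕ) : ℕ∞)
      ≤ coverNum (orthSeq p α - orthSeq p α) δ := by
  set m := indexBelow α (2 * δ)
  have hcard : ((Finset.range m).offDiag).card = m * (m - 1) := by
    rw [Finset.offDiag_card, Finset.card_range, Nat.mul_sub_one]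
  rw [← hcard]
  refine card_le_coverNum_of_separated _
    (fun q : ℕ × ℕ => lp.single p q.1 (α q.1) - lp.single p q.2 (α q.2))
    (fun q _ => sub_mem_sub ⟨q.1, rfl⟩ ⟨q.2, rfl⟩) ?_
  rintro ⟨i, j⟩ hq ⟨i', j'⟩ - hne
  simp only [Finset.mem_offDiag, Finset.mem_range] at hq
  obtain ⟨k, hk, hαk⟩ := exists_le_abs_apply_sub_sub (p := p) hpos hq.2.2 hne
  have hkm : k < m := by rcases hk with rfl | rfl <;> [exact hq.1; exact hq.2.1]
  calc 2 * δ ≤ α k := le_of_lt_indexBelow hkm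
    _ ≤ _ := hαk
    _ ≤ _ := by
      rw [dist_eq_norm, ← Real.norm_eq_abs]
      exact lp.norm_apply_le_norm (zero_lt_one.trans_le Fact.out).ne' _ k

lemma le_dimBox_orthSeq_sub_of_lt (hpos : ∀ n, 0 < α n) (hdec : Antitone α)
    (hlim : Tendsto α atTop (𝓝 0)) {s : ℝ} (hs : 0 < s)
    (hsA : (s : EReal) < dimBox (orthSeq p α)) :
    ((2 * s : ℝ) : EReal) ≤ dimBox (orthSeq p α - orthSeq p α) := by
  -- With `R = ε^(-s) < N(A, ε) ≤ M + 1`, the count `N(A - A, ε/4) ≥ M (M - 1) ≥ R² / 4`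
  -- produces the constant `C`.
  refine le_limsup_div_neg_log_of_frequently_le (C := -((2 * s + 1) * Real.log 4)) ?_
  have hlarge : ∀ᶠ ε in 𝓝[>] 0, Real.log 4 ≤ s * -Real.log ε :=
    (tendsto_neg_log_nhdsGT_zero.eventually_ge_atTop (Real.log 4 / s)).mono fun ε hε => by
      rwa [div_le_iff₀ hs, mul_comm] at hε
  refine (tendsto_div_const_nhdsGT_zero four_pos).frequently
    (((frequently_mul_neg_log_lt_of_lt_limsup hsA).and_eventually
      (hlarge.and self_mem_nhdsWithin)).mono ?_)
  rintro ε ⟨hN, hR4, hε⟩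
  set M := indexBelow α (ε / 2)
  set R := Real.exp (s * -Real.log ε)
  have hRM : R < M + 1 := by
    have h := hN.trans_le (elog_mono (coverNum_orthSeq_le hpos hdec hlim hε))
    rw [elog_natCast, EReal.coe_lt_coe_iff] at h
    exact_mod_cast (Real.lt_log_iff_exp_lt (by positivity)).1 h
  have hR : 4 ≤ R := (Real.log_le_iff_le_exp four_pos).1 hR4
  have hM1 : 1 ≤ M := by exact_mod_cast (show (1 : ℝ) ≤ M by linarith)
  have hsq : R ^ 2 / 4 ≤ ((M * (M - 1) : ℕ) : ℝ) := by
    push_cast [Nat.cast_sub hM1]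
    nlinarith
  have hcount := indexBelow_mul_pred_le_coverNum_orthSeq_sub (p := p) hpos (ε / 4)
  rw [show 2 * (ε / 4) = ε / 2 by ring] at hcount
  refine le_trans ?_ (elog_mono hcount)
  rw [elog_natCast, EReal.coe_le_coe_iff]
  calc -((2 * s + 1) * Real.log 4) + 2 * s * -Real.log (ε / 4)
      = Real.log (R ^ 2 / 4) := by
        rw [neg_log_div ε hε.ne' four_ne_zero, Real.log_div (by positivity) four_ne_zero,
          Real.log_pow, Real.log_exp]
        push_cast
        ring
    _ ≤ _ := Real.log_le_log (by positivity) hsq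

theorem two_mul_dimBox_orthSeq_le (hpos : ∀ n, 0 < α n) (hdec : Antitone α)
    (hlim : Tendsto α atTop (𝓝 0)) :
    2 * dimBox (orthSeq p α) ≤ dimBox (orthSeq p α - orthSeq p α) := by
  refine EReal.ge_of_forall_gt_iff_ge.1 fun z hz => ?_
  rcases le_or_gt z 0 with hz0 | hz0
  · exact (EReal.coe_nonpos.2 hz0).trans (dimBox_nonneg _)
  have hzA : ((z / 2 : ℝ) : EReal) < dimBox (orthSeq p α) := by
    rw [EReal.coe_div, EReal.div_lt_iff (by norm_num) (EReal.coe_ne_top 2), mul_comm]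
    exact_mod_cast hz
  simpa [mul_div_cancel₀] using
    le_dimBox_orthSeq_sub_of_lt hpos hdec hlim (half_pos hz0) hzA

end OrthSeq

/-- for the `orthogonal' sequence `A = {α_n e_n} ⊂ ℓ_p`,
`d_B(A - A) = 2 d_B(A)`. -/
theorem dimBox_sub_orthogonal_seq (p : ℝ≥0∞) [Fact (1 ≤ p)]
    (α : ℕ → ℝ) (hpos : ∀ n, 0 < α n) (hdec : Antitone α)
    (hlim : Tendsto α atTop (𝓝 0)) :
    dimBox ((Set.range fun n : ℕ => (lp.single p n (α n) : lp (fun _ : ℕ => ℝ) p)) -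
            (Set.range fun n : ℕ => (lp.single p n (α n) : lp (fun _ : ℕ => ℝ) p)))
      = 2 * dimBox (Set.range fun n : ℕ => (lp.single p n (α n) : lp (fun _ : ℕ => ℝ) p)) := by
  change dimBox (orthSeq p α - orthSeq p α) = 2 * dimBox (orthSeq p α)
  refine le_antisymm ?_ (two_mul_dimBox_orthSeq_le hpos hdec hlim)
  calc dimBox (orthSeq p α - orthSeq p α) ≤ dimBox (orthSeq p α) + dimBox (orthSeq p α) :=
        dimBox_sub_le _ _
    _ = 2 * dimBox (orthSeq p α) := by
        rw [← one_add_one_eq_two, EReal.right_distrib_of_nonneg zero_le_one zero_le_one, one_mul]
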